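/- Let (ρ_m) be a stationary family of density matrices satisfying the finite ergodicity condition: for all m and all a, b on H^{⊗m}, lim_{n→∞} (1/n) Σ_{i=m}^n tr(ρ_{m+i} (a ⊗ I^{⊗(i−m)} ⊗ b)) = tr(ρ_m a)·tr(ρ_m b). Then for any trace-preserving Kraus map ℰ on B(H), the family (ℰ^{⊗m}(ρ_m)) also satisfies this ergodicity condition. -/
import Mathlib


open Matrix Finset Filter Topology

/-- Operators on the `m`-fold tensor power of a `d`-dimensional Hilbert space,
realized as matrices indexed by `Fin m → Fin d`. -/
abbrev MP (d m : ℕ) := Matrix (Fin m → Fin d) (Fin m → Fin d) ℂ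

/-- The tensor (Kronecker) product of `m` one-site matrices. -/
def kron {d : ℕ} (m : ℕ) (B : Fin m → Matrix (Fin d) (Fin d) ℂ) : MP d m :=
  Matrix.of fun x y => ∏ k, B k (x k) (y k)

/-- The `m`-fold tensor product channel `ℰ^{⊗ m}` of the Kraus map
`ℰ(ρ) = ∑ j, A j * ρ * (A j)ᴴ`. -/
noncomputable def tensorE {d : ℕ} {ι : Type} [Fintype ι] (A : ι → Matrix (Fin d) (Fin d) ℂ) (m : ℕ)
    (ρ : MP d m) : MP d m :=
  ∑ j : Fin m → ι, kron m (fun k => A (j k)) * ρ * (kron m (fun k => A (j k)))ᴴ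

/-- The `m`-fold tensor product `(ℰ*)^{⊗ m}` of the dual (Heisenberg picture) map
`ℰ*(a) = ∑ j, (A j)ᴴ * a * A j`. -/
noncomputable def tensorDual {d : ℕ} {ι : Type} [Fintype ι] (A : ι → Matrix (Fin d) (Fin d) ℂ) (m : ℕ)
    (a : MP d m) : MP d m :=
  ∑ j : Fin m → ι, (kron m (fun k => A (j k)))ᴴ * a * kron m (fun k => A (j k))

/-- The operator `a ⊗ I^{⊗(i-m)} ⊗ b` on `H^{⊗(m+i)}` (for `m ≤ i`), where `a` acts on the
first `m` sites, `b` acts on the sites `i,…,i+m-1`, and identity acts in between. -/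
def sandw (d m i : ℕ) (a b : MP d m) : MP d (m + i) :=
  Matrix.of fun x y =>
    a (fun k => x (Fin.castLE (Nat.le_add_right m i) k))
      (fun k => y (Fin.castLE (Nat.le_add_right m i) k)) *
    b (fun k => x ⟨i + k.1, by have := k.2; omega⟩) (fun k => y ⟨i + k.1, by have := k.2; omega⟩) *
    ∏ j : Fin (m + i), if m ≤ (j : ℕ) ∧ (j : ℕ) < i then (if x j = y j then (1:ℂ) else 0) else 1

/-- The operator `a ⊗ I^{⊗ i}` on `H^{⊗(m+i)}`. -/
def rightPad (d m i : ℕ) (a : MP d m) : MP d (m + i) :=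
  Matrix.of fun x y =>
    a (fun k => x (Fin.castLE (Nat.le_add_right m i) k))
      (fun k => y (Fin.castLE (Nat.le_add_right m i) k)) *
    ∏ j : Fin (m + i), if m ≤ (j : ℕ) then (if x j = y j then (1:ℂ) else 0) else 1

/-- The operator `I^{⊗ i} ⊗ a` on `H^{⊗(m+i)}`. -/
def leftPad (d m i : ℕ) (a : MP d m) : MP d (m + i) :=
  Matrix.of fun x y =>
    a (fun k => x ⟨i + k.1, by have := k.2; omega⟩) (fun k => y ⟨i + k.1, by have := k.2; omega⟩) *
    ∏ j : Fin (m + i), if (j : ℕ) < i then (if x j = y j then (1:ℂ) else 0) else 1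

open scoped ComplexOrder

section ErgodicityHelpers

variable {d : ℕ} {ι : Type} [Fintype ι]

lemma kron_mul {m : ℕ} (B C : Fin m → Matrix (Fin d) (Fin d) ℂ) :
    kron m B * kron m C = kron m (fun k => B k * C k) := by
  ext x y
  simp only [Matrix.mul_apply, kron, Matrix.of_apply]
  rw [Fintype.prod_sum (fun k t => B k (x k) t * C k t (y k))]
  exact Finset.sum_congr rfl fun z _ => Finset.prod_mul_distrib.symm

lemma kron_conjTranspose {m : ℕ} (B : Fin m → Matrix (Fin d) (Fin d) ℂ) :
    (kron m B)ᴴ = kron m (fun k => (B k)ᴴ) := by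
  ext x y
  simp [kron, Matrix.conjTranspose_apply, star_prod]

/-- The dual (Heisenberg) single-site map `b ↦ ∑ j, (A j)ᴴ b (A j)`. -/
noncomputable def dualSite (A : ι → Matrix (Fin d) (Fin d) ℂ) (b : Matrix (Fin d) (Fin d) ℂ) :
    Matrix (Fin d) (Fin d) ℂ :=
  ∑ j, (A j)ᴴ * b * A j

lemma dualSite_one (A : ι → Matrix (Fin d) (Fin d) ℂ) (hA : ∑ j, (A j)ᴴ * A j = 1) :
    dualSite A 1 = 1 := by
  simp only [dualSite, Matrix.mul_one, hA]

lemma tensorDual_kron (A : ι → Matrix (Fin d) (Fin d) ℂ) {n : ℕ}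
    (B : Fin n → Matrix (Fin d) (Fin d) ℂ) :
    tensorDual A n (kron n B) = kron n (fun k => dualSite A (B k)) := by
  unfold tensorDual
  simp only [kron_conjTranspose, kron_mul]
  ext x y
  simp only [Matrix.sum_apply, kron, Matrix.of_apply, dualSite]
  rw [Fintype.prod_sum (fun k t => ((A t)ᴴ * B k * A t) (x k) (y k))]

lemma prod_eq_prod_range {n m : ℕ} (e : Fin m → Fin n) (he : Function.Injective e)
    (F : Fin n → ℂ) (hF : ∀ j, (∀ k, e k ≠ j) → F j = 1) :
    ∏ j, F j = ∏ k, F (e k) := by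
  rw [← Finset.prod_image (fun a _ b _ h => he h)]
  exact (Finset.prod_subset (Finset.subset_univ _) (fun j _ hj =>
    hF j fun k hk => hj (Finset.mem_image.mpr ⟨k, Finset.mem_univ k, hk⟩))).symm

/-- The site-wise family describing `a ⊗ I^{⊗(i-m)} ⊗ b` when `a = ⊗ B k` and `b = ⊗ C k`. -/
def blockD {d : ℕ} (m i : ℕ) (B C : Fin m → Matrix (Fin d) (Fin d) ℂ) (j : Fin (m + i)) :
    Matrix (Fin d) (Fin d) ℂ :=
  if h1 : (j : ℕ) < m then B ⟨j, h1⟩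
  else if h2 : (j : ℕ) < i then 1
  else C ⟨(j : ℕ) - i, by have := j.2; omega⟩

lemma sandw_kron {m i : ℕ} (h : m ≤ i) (B C : Fin m → Matrix (Fin d) (Fin d) ℂ) :
    sandw d m i (kron m B) (kron m C) = kron (m + i) (blockD m i B C) := by
  ext x y
  simp only [sandw, kron, Matrix.of_apply]
  have hsplit : ∀ j : Fin (m + i),
      blockD m i B C j (x j) (y j) =
        (if h1 : (j : ℕ) < m then B ⟨j, h1⟩ (x j) (y j) else 1) *
        (if h2 : i ≤ (j : ℕ) then C ⟨(j : ℕ) - i, by have := j.2; omega⟩ (x j) (y j) else 1) *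
        (if m ≤ (j : ℕ) ∧ (j : ℕ) < i then (if x j = y j then (1:ℂ) else 0) else 1) := by
    intro j
    by_cases h1 : (j : ℕ) < m
    · have h2 : ¬ i ≤ (j : ℕ) := by omega
      have h3 : ¬ (m ≤ (j : ℕ) ∧ (j : ℕ) < i) := by omega
      simp [blockD, dif_pos h1, dif_neg h2, if_neg h3]
    · by_cases h2 : (j : ℕ) < i
      · simp [blockD, h1, h2, not_le.mpr h2, Matrix.one_apply, not_lt.mp h1]
      · simp [blockD, h1, h2, not_lt.mp h2]
  rw [Finset.prod_congr rfl (fun j _ => hsplit j), Finset.prod_mul_distrib,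
    Finset.prod_mul_distrib]
  congr 1
  congr 1
  · -- front block
    rw [prod_eq_prod_range (fun k : Fin m => Fin.castLE (Nat.le_add_right m i) k)
      (fun a b hab => by simpa [Fin.ext_iff] using hab)
      _ (fun j hj => dif_neg (fun h1 => (hj ⟨(j : ℕ), h1⟩ (by simp [Fin.ext_iff]))))]
    refine Finset.prod_congr rfl fun k _ => ?_
    rw [dif_pos (by simp)]
    congr 1
  · -- back block
    rw [prod_eq_prod_range (fun k : Fin m => (⟨i + k.1, by have := k.2; omega⟩ : Fin (m + i)))
      (fun a b hab => by simp [Fin.ext_iff] at hab; exact Fin.ext (by omega))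
      _ (fun j hj => dif_neg (fun h2 => (hj ⟨(j : ℕ) - i, by have := j.2; omega⟩
        (by simp [Fin.ext_iff]; omega))))]
    refine Finset.prod_congr rfl fun k _ => ?_
    rw [dif_pos (by simp)]
    congr 1
    exact Fin.ext (by simp)

lemma tensorDual_sum (A : ι → Matrix (Fin d) (Fin d) ℂ) {n : ℕ} {σ : Type*} (s : Finset σ)
    (f : σ → MP d n) :
    tensorDual A n (∑ z ∈ s, f z) = ∑ z ∈ s, tensorDual A n (f z) := by
  simp only [tensorDual, Finset.mul_sum, Finset.sum_mul]
  exact Finset.sum_comm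

lemma tensorDual_smul (A : ι → Matrix (Fin d) (Fin d) ℂ) {n : ℕ} (c : ℂ) (a : MP d n) :
    tensorDual A n (c • a) = c • tensorDual A n a := by
  simp [tensorDual, Matrix.mul_smul, Matrix.smul_mul, Finset.smul_sum]

lemma sandw_sum_left {m i : ℕ} {σ : Type*} (s : Finset σ) (f : σ → MP d m) (b : MP d m) :
    sandw d m i (∑ z ∈ s, f z) b = ∑ z ∈ s, sandw d m i (f z) b := by
  ext x y
  simp [sandw, Matrix.sum_apply, Finset.sum_mul]

lemma sandw_sum_right {m i : ℕ} {σ : Type*} (s : Finset σ) (a : MP d m) (f : σ → MP d m) :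
    sandw d m i a (∑ z ∈ s, f z) = ∑ z ∈ s, sandw d m i a (f z) := by
  ext x y
  simp [sandw, Matrix.sum_apply, Finset.sum_mul, Finset.mul_sum]

lemma sandw_smul_left {m i : ℕ} (c : ℂ) (a b : MP d m) :
    sandw d m i (c • a) b = c • sandw d m i a b := by
  ext x y
  simp only [sandw, Matrix.of_apply, Matrix.smul_apply, smul_eq_mul]
  ring

lemma sandw_smul_right {m i : ℕ} (c : ℂ) (a b : MP d m) :
    sandw d m i a (c • b) = c • sandw d m i a b := by
  ext x y
  simp only [sandw, Matrix.of_apply, Matrix.smul_apply, smul_eq_mul]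
  ring

lemma eMat_apply {m : ℕ} (p q x y : Fin m → Fin d) :
    kron m (fun k => Matrix.single (p k) (q k) (1:ℂ)) x y
      = if p = x ∧ q = y then 1 else 0 := by
  simp only [kron, Matrix.of_apply, Matrix.single, Matrix.of_apply]
  by_cases hp : p = x ∧ q = y
  · obtain ⟨h1, h2⟩ := hp
    subst h1; subst h2
    simp
  · rw [if_neg hp]
    have : ∃ k, ¬ (p k = x k ∧ q k = y k) := by
      by_contra hc
      push_neg at hc
      exact hp ⟨funext fun k => (hc k).1, funext fun k => (hc k).2⟩
    obtain ⟨k, hk⟩ := this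
    exact Finset.prod_eq_zero (Finset.mem_univ k) (by rw [if_neg hk])

lemma matrix_decomp {m : ℕ} (a : MP d m) :
    a = ∑ p : Fin m → Fin d, ∑ q : Fin m → Fin d,
      a p q • kron m (fun k => Matrix.single (p k) (q k) (1:ℂ)) := by
  ext x y
  simp [Matrix.sum_apply, Matrix.smul_apply, eMat_apply, smul_eq_mul, mul_ite, mul_one,
    mul_zero, ite_and, Finset.sum_ite_eq, Finset.sum_ite_eq']

lemma tensorDual_sandw_kron {m i : ℕ} (A : ι → Matrix (Fin d) (Fin d) ℂ)
    (hA : ∑ j, (A j)ᴴ * A j = 1) (h : m ≤ i) (B C : Fin m → Matrix (Fin d) (Fin d) ℂ) :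
    tensorDual A (m + i) (sandw d m i (kron m B) (kron m C))
      = sandw d m i (tensorDual A m (kron m B)) (tensorDual A m (kron m C)) := by
  have hfun : (fun k : Fin (m + i) => dualSite A (blockD m i B C k))
      = blockD m i (fun k => dualSite A (B k)) (fun k => dualSite A (C k)) := by
    funext k
    by_cases h1 : (k : ℕ) < m
    · simp [blockD, dif_pos h1]
    · by_cases h2 : (k : ℕ) < i
      · simp [blockD, dif_neg h1, dif_pos h2, dualSite_one A hA]
      · simp [blockD, dif_neg h1, dif_neg h2]
  rw [sandw_kron h, tensorDual_kron, tensorDual_kron, tensorDual_kron, hfun, sandw_kron h]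

lemma tensorDual_sandw {m i : ℕ} (A : ι → Matrix (Fin d) (Fin d) ℂ)
    (hA : ∑ j, (A j)ᴴ * A j = 1) (h : m ≤ i) (a b : MP d m) :
    tensorDual A (m + i) (sandw d m i a b)
      = sandw d m i (tensorDual A m a) (tensorDual A m b) := by
  have ha := matrix_decomp a
  have hb := matrix_decomp b
  rw [ha, hb]
  simp only [sandw_sum_left, sandw_sum_right, sandw_smul_left, sandw_smul_right,
    tensorDual_sum, tensorDual_smul, Finset.smul_sum]
  refine Finset.sum_congr rfl fun p _ => Finset.sum_congr rfl fun q _ =>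
    Finset.sum_congr rfl fun r _ => Finset.sum_congr rfl fun s _ => ?_
  rw [tensorDual_sandw_kron A hA h]

lemma trace_tensorE {n : ℕ} (A : ι → Matrix (Fin d) (Fin d) ℂ) (ρ a : MP d n) :
    (tensorE A n ρ * a).trace = (ρ * tensorDual A n a).trace := by
  unfold tensorE tensorDual
  rw [Finset.sum_mul, Matrix.trace_sum, Finset.mul_sum, Matrix.trace_sum]
  refine Finset.sum_congr rfl fun j _ => ?_
  set K := kron n (fun k => A (j k)) with hK
  calc (K * ρ * Kᴴ * a).trace
      = ((K * ρ) * (Kᴴ * a)).trace := by rw [mul_assoc (K * ρ)]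
    _ = ((Kᴴ * a) * (K * ρ)).trace := Matrix.trace_mul_comm _ _
    _ = ((Kᴴ * a * K) * ρ).trace := by rw [← mul_assoc]
    _ = (ρ * (Kᴴ * a * K)).trace := Matrix.trace_mul_comm _ _

end ErgodicityHelpers



/-- A tensor-product trace-preserving Kraus map preserves the (Cesàro) ergodicity of a
stationary family of density matrices. -/
theorem tensorE_preserves_ergodicity {d : ℕ} {ι : Type} [Fintype ι]
    (A : ι → Matrix (Fin d) (Fin d) ℂ)
    (hA : ∑ j, (A j)ᴴ * A j = 1)
    (ρ : (m : ℕ) → MP d m)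
    -- each `ρ m` is a density matrix
    (hdens : ∀ m, (ρ m).PosSemidef ∧ (ρ m).trace = 1)
    -- stationarity: `tr(ρ_m a) = tr(ρ_{m+i} (I^{⊗ i} ⊗ a))`
    (hstat : ∀ m i : ℕ, ∀ a : MP d m,
      (ρ m * a).trace = (ρ (m + i) * leftPad d m i a).trace)
    -- ergodicity
    (herg : ∀ m : ℕ, ∀ a b : MP d m,
      Tendsto (fun n : ℕ => (1 / (n : ℂ)) *
          ∑ i ∈ Finset.Icc m n, (ρ (m + i) * sandw d m i a b).trace)
        atTop (𝓝 ((ρ m * a).trace * (ρ m * b).trace))) :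
    ∀ m : ℕ, ∀ a b : MP d m,
      Tendsto (fun n : ℕ => (1 / (n : ℂ)) *
          ∑ i ∈ Finset.Icc m n, (tensorE A (m + i) (ρ (m + i)) * sandw d m i a b).trace)
        atTop (𝓝 ((tensorE A m (ρ m) * a).trace * (tensorE A m (ρ m) * b).trace)) := by
  intro m a b
  have hval : (tensorE A m (ρ m) * a).trace * (tensorE A m (ρ m) * b).trace
      = (ρ m * tensorDual A m a).trace * (ρ m * tensorDual A m b).trace := by
    rw [trace_tensorE, trace_tensorE]
  rw [hval]
  refine Tendsto.congr (fun n => ?_) (herg m (tensorDual A m a) (tensorDual A m b))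
  congr 1
  refine Finset.sum_congr rfl fun i hi => ?_
  have him : m ≤ i := (Finset.mem_Icc.mp hi).1
  rw [trace_tensorE, tensorDual_sandw A hA him]
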